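/- arXiv:2009.03414 — 4 statements merged into one kernel-verified Lean document; each statement's English description precedes it below -/
import Mathlib

section
/- Let d ∈ ℝ and k_q, k_e > 0. For θ ∈ ℝ let C̄(θ) denote the 3×2 real matrix whose first row is (0, 1), second row is (cos θ, −d sin θ), and third row is (sin θ, d cos θ). Suppose θ : [0,∞) → ℝ is continuous, and q̃ : [0,∞) → ℝ² and ẽ : [0,∞) → ℝ³ are differentiable functions satisfying, for all t ≥ 0, q̃′(t) = −k_q · q̃(t) − C̄(θ(t))ᵀ ẽ(t) and ẽ′(t) = C̄(θ(t)) q̃(t) − k_e · (0, ẽ₂(t), ẽ₃(t)). Then ẽ(t) → 0 and q̃(t) → 0 as t → ∞. -/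
open Matrix Filter Real

/-!
The energy `‖q̃‖² + ‖ẽ‖²` is only a weak Lyapunov function: the coupling through `C̄(θ)` is
skew, so its derivative is `-2 k_q ‖q̃‖² - 2 k_e ‖e_z‖²`, which does not see the heading
error `e_θ`. Since `e_θ' = q̃₂`, adding the small cross term `ε q̃₂ e_θ` contributes
`-ε e_θ²` to the derivative, at the price of terms that the energy dissipation absorbs
when `ε` is small. The resulting strict Lyapunov function `V` is comparable to the energy
and satisfies `V' ≤ -λ V`, so it decays exponentially, and so do both errors.
-/

noncomputable def Cbar (d θ : ℝ) : Matrix (Fin 3) (Fin 2) ℝ :=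
  !![0, 1; Real.cos θ, -d * Real.sin θ; Real.sin θ, d * Real.cos θ]

section DotProduct

variable {n : Type*} [Fintype n]

theorem dotProduct_self_nonneg (x : n → ℝ) : 0 ≤ x ⬝ᵥ x :=
  Fintype.sum_nonneg fun i => mul_self_nonneg (x i)

theorem sq_le_dotProduct_self (x : n → ℝ) (i : n) : x i ^ 2 ≤ x ⬝ᵥ x := by
  simpa only [dotProduct, sq] using
    Finset.single_le_sum (fun j _ => mul_self_nonneg (x j)) (Finset.mem_univ i)

theorem HasDerivAt.dotProduct {x y : ℝ → n → ℝ} {x' y' : n → ℝ} {t : ℝ}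
    (hx : HasDerivAt x x' t) (hy : HasDerivAt y y' t) :
    HasDerivAt (fun s => x s ⬝ᵥ y s) (x' ⬝ᵥ y t + x t ⬝ᵥ y') t := by
  have hx' := hasDerivAt_pi.mp hx
  have hy' := hasDerivAt_pi.mp hy
  have h := HasDerivAt.fun_sum (u := Finset.univ) fun i _ => (hx' i).fun_mul (hy' i)
  rw [Finset.sum_add_distrib] at h
  exact h

theorem tendsto_zero_of_dotProduct_self_le {α : Type*} {l : Filter α} {x : α → n → ℝ}
    {g : α → ℝ} (hg : Tendsto g l (nhds 0)) (hxg : ∀ᶠ a in l, x a ⬝ᵥ x a ≤ g a) :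
    Tendsto x l (nhds 0) := by
  rw [tendsto_pi_nhds]
  intro i
  have hsq : Tendsto (fun a => x a i ^ 2) l (nhds 0) :=
    tendsto_of_tendsto_of_tendsto_of_le_of_le' tendsto_const_nhds hg
      (Eventually.of_forall fun a => sq_nonneg _)
      (hxg.mono fun a ha => (sq_le_dotProduct_self (x a) i).trans ha)
  have habs := hsq.sqrt
  simp only [sqrt_sq_eq_abs, sqrt_zero] at habs
  exact (tendsto_zero_iff_abs_tendsto_zero _).mpr habs

end DotProduct

theorem dotProduct_neg_smul_sub_add_dotProduct_sub_smul {m n : Type*} [Fintype m] [Fintype n]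
    (C : Matrix m n ℝ) (a b : ℝ) (q : n → ℝ) (e p : m → ℝ) :
    q ⬝ᵥ ((-a) • q - Cᵀ *ᵥ e) + e ⬝ᵥ (C *ᵥ q - b • p) = -a * (q ⬝ᵥ q) - b * (e ⬝ᵥ p) := by
  rw [dotProduct_sub, dotProduct_sub, dotProduct_smul, dotProduct_smul, dotProduct_mulVec,
    vecMul_transpose, dotProduct_comm (C *ᵥ q) e, smul_eq_mul, smul_eq_mul]
  ring

theorem le_mul_exp_neg_of_hasDerivAt_le_neg_mul {V V' : ℝ → ℝ} {r : ℝ}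
    (hV : ∀ t, 0 ≤ t → HasDerivAt V (V' t) t) (hV' : ∀ t, 0 ≤ t → V' t ≤ -r * V t)
    {t : ℝ} (ht : 0 ≤ t) : V t ≤ V 0 * exp (-(r * t)) := by
  have hderiv : ∀ s, 0 ≤ s →
      HasDerivAt (fun s => exp (r * s) * V s) (exp (r * s) * (r * V s + V' s)) s :=
    fun s hs => (((hasDerivAt_id' s).const_mul r).exp.fun_mul (hV s hs)).congr_deriv (by ring)
  have hanti : AntitoneOn (fun s => exp (r * s) * V s) (Set.Ici 0) := by
    refine antitoneOn_of_hasDerivWithinAt_nonpos (f' := fun s => exp (r * s) * (r * V s + V' s))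
      (convex_Ici 0)
      (fun s hs => (hderiv s hs).continuousAt.continuousWithinAt) (fun s hs => ?_) fun s hs => ?_
    all_goals rw [interior_Ici] at hs
    · exact (hderiv s (le_of_lt hs)).hasDerivWithinAt
    · exact mul_nonpos_of_nonneg_of_nonpos (exp_pos _).le (by linarith [hV' s (le_of_lt hs)])
  have hmono : exp (r * t) * V t ≤ V 0 := by
    simpa using hanti Set.self_mem_Ici ht ht
  calc V t = exp (-(r * t)) * (exp (r * t) * V t) := by
        rw [← mul_assoc, ← exp_add, neg_add_cancel, exp_zero, one_mul]
    _ ≤ exp (-(r * t)) * V 0 := mul_le_mul_of_nonneg_left hmono (exp_pos _).le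
    _ = V 0 * exp (-(r * t)) := mul_comm _ _

theorem Cbar_mulVec_zero (d θ : ℝ) (q : Fin 2 → ℝ) : (Cbar d θ *ᵥ q) 0 = q 1 := by
  simp [Cbar, mulVec, dotProduct, Fin.sum_univ_two]

theorem Cbar_transpose_mulVec_one (d θ : ℝ) (e : Fin 3 → ℝ) :
    ((Cbar d θ)ᵀ *ᵥ e) 1 = e 0 - d * (sin θ * e 1 - cos θ * e 2) := by
  simp only [Cbar, mulVec, dotProduct, Fin.sum_univ_three, transpose_apply, of_apply, cons_val',
    cons_val_zero, cons_val_one, cons_val, cons_val_fin_one, one_mul]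
  ring

theorem sq_sin_mul_sub_cos_mul_le (θ a b : ℝ) : (sin θ * a - cos θ * b) ^ 2 ≤ a ^ 2 + b ^ 2 := by
  nlinarith [sq_nonneg (cos θ * a + sin θ * b), sin_sq_add_cos_sq θ]

/-- In the paper's notation `q 1 = q̃₂` and `e 0 = e_θ`. -/
def trackingLyapunov (ε : ℝ) (q : Fin 2 → ℝ) (e : Fin 3 → ℝ) : ℝ :=
  q ⬝ᵥ q + e ⬝ᵥ e + ε * (q 1 * e 0)

theorem abs_trackingLyapunov_sub_le {ε : ℝ} (hε₀ : 0 ≤ ε) (hε₁ : ε ≤ 1)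
    (q : Fin 2 → ℝ) (e : Fin 3 → ℝ) :
    |trackingLyapunov ε q e - (q ⬝ᵥ q + e ⬝ᵥ e)| ≤ (q ⬝ᵥ q + e ⬝ᵥ e) / 2 := by
  have hq := sq_le_dotProduct_self q 1
  have he := sq_le_dotProduct_self e 0
  have hprod : |q 1 * e 0| ≤ (q 1 ^ 2 + e 0 ^ 2) / 2 := by
    rw [abs_le]
    constructor <;> nlinarith [sq_nonneg (q 1 + e 0), sq_nonneg (q 1 - e 0)]
  rw [trackingLyapunov, add_sub_cancel_left, abs_mul, abs_of_nonneg hε₀]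
  calc ε * |q 1 * e 0| ≤ 1 * |q 1 * e 0| := mul_le_mul_of_nonneg_right hε₁ (abs_nonneg _)
    _ ≤ (q ⬝ᵥ q + e ⬝ᵥ e) / 2 := by linarith

theorem hasDerivAt_trackingLyapunov (ε : ℝ) {q : ℝ → Fin 2 → ℝ} {e : ℝ → Fin 3 → ℝ}
    {q' : Fin 2 → ℝ} {e' : Fin 3 → ℝ} {t : ℝ} (hq : HasDerivAt q q' t) (he : HasDerivAt e e' t) :
    HasDerivAt (fun s => trackingLyapunov ε (q s) (e s))
      (2 * (q t ⬝ᵥ q') + 2 * (e t ⬝ᵥ e') + ε * (q' 1 * e t 0 + q t 1 * e' 0)) t := by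
  have hcross := ((hasDerivAt_pi.mp hq 1).fun_mul (hasDerivAt_pi.mp he 0)).const_mul ε
  refine (((hq.dotProduct hq).add (he.dotProduct he)).add hcross).congr_deriv ?_
  rw [dotProduct_comm q', dotProduct_comm e']
  ring

theorem trackingLyapunov_deriv_le {d kq ke ε θ : ℝ} (hε₀ : 0 ≤ ε)
    (hεq : ε * (1 + kq ^ 2) ≤ kq) (hεe : ε * d ^ 2 ≤ ke) {q q' : Fin 2 → ℝ} {e e' : Fin 3 → ℝ}
    (hq' : q' = (-kq) • q - (Cbar d θ)ᵀ *ᵥ e) (he' : e' = Cbar d θ *ᵥ q - ke • ![0, e 1, e 2]) :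
    2 * (q ⬝ᵥ q') + 2 * (e ⬝ᵥ e') + ε * (q' 1 * e 0 + q 1 * e' 0)
      ≤ -min kq (min ke (ε / 2)) * (q ⬝ᵥ q + e ⬝ᵥ e) := by
  subst hq' he'
  have henergy : 2 * (q ⬝ᵥ ((-kq) • q - (Cbar d θ)ᵀ *ᵥ e))
        + 2 * (e ⬝ᵥ (Cbar d θ *ᵥ q - ke • ![0, e 1, e 2]))
      = -2 * kq * (q 0 ^ 2 + q 1 ^ 2) - 2 * ke * (e 1 ^ 2 + e 2 ^ 2) := by
    rw [← mul_add, dotProduct_neg_smul_sub_add_dotProduct_sub_smul]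
    simp only [dotProduct, Fin.sum_univ_two, Fin.sum_univ_three, cons_val_zero, cons_val_one,
      cons_val, mul_zero, zero_add]
    ring
  set w := sin θ * e 1 - cos θ * e 2
  have hq₁ : ((-kq) • q - (Cbar d θ)ᵀ *ᵥ e) 1 = -kq * q 1 - e 0 + d * w := by
    simp only [Pi.sub_apply, Pi.smul_apply, smul_eq_mul, Cbar_transpose_mulVec_one]
    ring
  have he₀ : (Cbar d θ *ᵥ q - ke • ![0, e 1, e 2]) 0 = q 1 := by
    simp only [Pi.sub_apply, Pi.smul_apply, Cbar_mulVec_zero, cons_val_zero, smul_zero,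
      sub_zero]
  have hkq : 0 ≤ kq := le_trans (by positivity) hεq
  set μ := min kq (min ke (ε / 2))
  have hμq : μ ≤ kq := min_le_left _ _
  have hμe : μ ≤ ke := (min_le_right _ _).trans (min_le_left _ _)
  have hμε : μ ≤ ε / 2 := (min_le_right _ _).trans (min_le_right _ _)
  -- Young's inequality on the two indefinite terms of the cross-term derivative
  have hyoung₁ : ε * (-kq * q 1 * e 0) ≤ ε * (kq ^ 2 * q 1 ^ 2 + e 0 ^ 2 / 4) :=
    mul_le_mul_of_nonneg_left (by nlinarith [sq_nonneg (kq * q 1 + e 0 / 2)]) hε₀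
  have hyoung₂ : ε * (d * w * e 0) ≤ ε * (d ^ 2 * w ^ 2 + e 0 ^ 2 / 4) :=
    mul_le_mul_of_nonneg_left (by nlinarith [sq_nonneg (d * w - e 0 / 2)]) hε₀
  have hw : ε * d ^ 2 * w ^ 2 ≤ ε * d ^ 2 * (e 1 ^ 2 + e 2 ^ 2) :=
    mul_le_mul_of_nonneg_left (sq_sin_mul_sub_cos_mul_le θ (e 1) (e 2)) (by positivity)
  rw [henergy, hq₁, he₀]
  simp only [dotProduct, Fin.sum_univ_two, Fin.sum_univ_three]
  linarith [mul_le_mul_of_nonneg_right hεq (sq_nonneg (q 1)),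
    mul_le_mul_of_nonneg_right hεe (add_nonneg (sq_nonneg (e 1)) (sq_nonneg (e 2))),
    mul_le_mul_of_nonneg_right hμq (sq_nonneg (q 0)), mul_le_mul_of_nonneg_right hμq (sq_nonneg (q 1)),
    mul_le_mul_of_nonneg_right hμe (sq_nonneg (e 1)), mul_le_mul_of_nonneg_right hμe (sq_nonneg (e 2)),
    mul_le_mul_of_nonneg_right hμε (sq_nonneg (e 0)), mul_nonneg hkq (sq_nonneg (q 0))]

theorem exists_pos_le_one_mul_le {kq ke : ℝ} (hkq : 0 < kq) (hke : 0 < ke) (d : ℝ) :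
    ∃ ε : ℝ, 0 < ε ∧ ε ≤ 1 ∧ ε * (1 + kq ^ 2) ≤ kq ∧ ε * d ^ 2 ≤ ke := by
  set ε := min 1 (min (kq / (1 + kq ^ 2)) (ke / (1 + d ^ 2)))
  have hε₀ : 0 < ε := lt_min one_pos (lt_min (by positivity) (by positivity))
  have hεq : ε ≤ kq / (1 + kq ^ 2) := (min_le_right _ _).trans (min_le_left _ _)
  have hεe : ε ≤ ke / (1 + d ^ 2) := (min_le_right _ _).trans (min_le_right _ _)
  rw [le_div_iff₀ (by positivity)] at hεq hεe
  exact ⟨ε, hε₀, min_le_left _ _, hεq, by linarith⟩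

theorem ddwmr_tracking_errors_tendsto_zero_general
    (d kq ke : ℝ) (hkq : 0 < kq) (hke : 0 < ke)
    (θ : ℝ → ℝ)
    (qt : ℝ → (Fin 2 → ℝ)) (et : ℝ → (Fin 3 → ℝ))
    (hq : ∀ t, 0 ≤ t →
      HasDerivAt qt ((-kq) • qt t - (Cbar d (θ t))ᵀ.mulVec (et t)) t)
    (he : ∀ t, 0 ≤ t →
      HasDerivAt et ((Cbar d (θ t)).mulVec (qt t) - ke • ![(0 : ℝ), et t 1, et t 2]) t) :
    Tendsto et atTop (nhds 0) ∧ Tendsto qt atTop (nhds 0) := by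
  obtain ⟨ε, hε₀, hε₁, hεq, hεe⟩ := exists_pos_le_one_mul_le hkq hke d
  set μ := min kq (min ke (ε / 2))
  have hμ : 0 < μ := lt_min hkq (lt_min hke (half_pos hε₀))
  set V := fun t => trackingLyapunov ε (qt t) (et t)
  set S := fun t => qt t ⬝ᵥ qt t + et t ⬝ᵥ et t
  have hVS : ∀ t, |V t - S t| ≤ S t / 2 := fun t => abs_trackingLyapunov_sub_le hε₀.le hε₁ _ _
  have hdecay : ∀ t, 0 ≤ t → V t ≤ V 0 * exp (-(2 * μ / 3 * t)) := by
    refine fun t => le_mul_exp_neg_of_hasDerivAt_le_neg_mul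
      (fun s hs => hasDerivAt_trackingLyapunov ε (hq s hs) (he s hs)) fun s _ => ?_
    have hV' := trackingLyapunov_deriv_le hε₀.le hεq hεe rfl rfl (θ := θ s) (q := qt s) (e := et s)
    have hVS' := mul_le_mul_of_nonneg_left (abs_le.mp (hVS s)).2 hμ.le
    linarith
  have hlim : Tendsto (fun t => 2 * V 0 * exp (-(2 * μ / 3 * t))) atTop (nhds 0) := by
    simpa using (tendsto_exp_neg_atTop_nhds_zero.comp
      (tendsto_id.const_mul_atTop (by positivity : 0 < 2 * μ / 3))).const_mul (2 * V 0)
  have hS : ∀ᶠ t in atTop, S t ≤ 2 * V 0 * exp (-(2 * μ / 3 * t)) :=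
    (eventually_ge_atTop 0).mono fun t ht => by
      linarith [hdecay t ht, (abs_le.mp (hVS t)).1]
  exact ⟨tendsto_zero_of_dotProduct_self_le hlim
      (hS.mono fun t h => by linarith [dotProduct_self_nonneg (qt t)]),
    tendsto_zero_of_dotProduct_self_le hlim
      (hS.mono fun t h => by linarith [dotProduct_self_nonneg (et t)])⟩

/-- Asymptotic convergence of the DDWMR closed-loop tracking errors:
if `q̃′ = −k_q q̃ − C̄(θ)ᵀ ẽ` and `ẽ′ = C̄(θ) q̃ − k_e (0, ẽ₂, ẽ₃)` on `[0,∞)`,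
with `k_q, k_e > 0`, then `ẽ(t) → 0` and `q̃(t) → 0` as `t → ∞`. -/
theorem ddwmr_tracking_errors_tendsto_zero
    (d kq ke : ℝ) (hkq : 0 < kq) (hke : 0 < ke)
    (θ : ℝ → ℝ) (hθ : ContinuousOn θ (Set.Ici (0 : ℝ)))
    (qt : ℝ → (Fin 2 → ℝ)) (et : ℝ → (Fin 3 → ℝ))
    (hq : ∀ t, 0 ≤ t →
      HasDerivAt qt ((-kq) • qt t - (Cbar d (θ t))ᵀ.mulVec (et t)) t)
    (he : ∀ t, 0 ≤ t →
      HasDerivAt et ((Cbar d (θ t)).mulVec (qt t) - ke • ![(0 : ℝ), et t 1, et t 2]) t) :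
    Tendsto et atTop (nhds 0) ∧ Tendsto qt atTop (nhds 0) :=
  ddwmr_tracking_errors_tendsto_zero_general d kq ke hkq hke θ qt et hq he
end

section
/- Let d ∈ ℝ and k_q, k_e > 0. For θ ∈ ℝ let C̄(θ) denote the 3×2 real matrix with rows (0, 1), (cos θ, −d sin θ), (sin θ, d cos θ). Suppose θ : [0,∞) → ℝ is continuous and q̃ : [0,∞) → ℝ², ẽ : [0,∞) → ℝ³ are differentiable with q̃′(t) = −k_q · q̃(t) − C̄(θ(t))ᵀ ẽ(t) and ẽ′(t) = C̄(θ(t)) q̃(t) − k_e · (0, ẽ₂(t), ẽ₃(t)) for all t ≥ 0. Define V(t) = ½‖q̃(t)‖² + ½‖ẽ(t)‖². Then V is differentiable and for all t ≥ 0, V′(t) = −k_q ‖q̃(t)‖² − k_e (ẽ₂(t)² + ẽ₃(t)²). -/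
open Matrix Filter Real

/-- Along the DDWMR closed-loop error dynamics, the Lyapunov candidate
`V = ½‖q̃‖² + ½‖ẽ‖²` (Euclidean norms) is differentiable with
`V′(t) = −k_q ‖q̃(t)‖² − k_e (ẽ₂(t)² + ẽ₃(t)²)` for all `t ≥ 0`. -/
theorem ddwmr_lyapunov_derivative
    (d kq ke : ℝ) (hkq : 0 < kq) (hke : 0 < ke)
    (θ : ℝ → ℝ) (hθ : ContinuousOn θ (Set.Ici (0 : ℝ)))
    (qt : ℝ → (Fin 2 → ℝ)) (et : ℝ → (Fin 3 → ℝ))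
    (hq : ∀ t, 0 ≤ t →
      HasDerivAt qt ((-kq) • qt t - (Cbar d (θ t))ᵀ.mulVec (et t)) t)
    (he : ∀ t, 0 ≤ t →
      HasDerivAt et ((Cbar d (θ t)).mulVec (qt t) - ke • ![(0 : ℝ), et t 1, et t 2]) t)
    (V : ℝ → ℝ)
    (hV : ∀ t, V t = (1 / 2) * (∑ i, (qt t i) ^ 2) + (1 / 2) * (∑ i, (et t i) ^ 2)) :
    ∀ t, 0 ≤ t →
      HasDerivAt V (-kq * (∑ i, (qt t i) ^ 2) - ke * ((et t 1) ^ 2 + (et t 2) ^ 2)) t := by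
  intro t ht
  have hq' := hasDerivAt_pi.mp (hq t ht)
  have he' := hasDerivAt_pi.mp (he t ht)
  have hVfun : V = fun s => (1/2) * ((qt s 0)^2 + (qt s 1)^2)
      + (1/2) * ((et s 0)^2 + ((et s 1)^2 + (et s 2)^2)) := by
    funext s
    rw [hV s, Fin.sum_univ_two, Fin.sum_univ_three]
    ring
  rw [hVfun]
  set A := (-kq) • qt t - (Cbar d (θ t))ᵀ.mulVec (et t) with hA
  set B := (Cbar d (θ t)).mulVec (qt t) - ke • ![(0 : ℝ), et t 1, et t 2] with hB
  have H : HasDerivAt (fun s => (1/2) * ((qt s 0)^2 + (qt s 1)^2)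
      + (1/2) * ((et s 0)^2 + ((et s 1)^2 + (et s 2)^2)))
      ((1/2) * (2 * qt t 0 ^ 1 * A 0 + 2 * qt t 1 ^ 1 * A 1)
      + (1/2) * (2 * et t 0 ^ 1 * B 0 + (2 * et t 1 ^ 1 * B 1 + 2 * et t 2 ^ 1 * B 2))) t := by
    exact ((((hq' 0).pow 2).add ((hq' 1).pow 2)).const_mul (1/2)).add
      ((((he' 0).pow 2).add (((he' 1).pow 2).add ((he' 2).pow 2))).const_mul (1/2))
  convert H using 1
  simp only [hA, hB, Cbar, Fin.sum_univ_two, Fin.sum_univ_three, Pi.sub_apply, Pi.smul_apply,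
    smul_eq_mul, Matrix.mulVec, dotProduct, Matrix.transpose_apply,
    Matrix.cons_val_zero, Matrix.cons_val_one, Matrix.head_cons, Matrix.cons_val_two,
    Matrix.tail_cons, Matrix.of_apply, Matrix.cons_val', Matrix.empty_val',
    Matrix.cons_val_fin_one, Matrix.head_fin_const]
  ring
end

section
/- Let d ∈ ℝ and k_q, k_e > 0, let θ : [0,∞) → ℝ be continuous, and let q̃ : [0,∞) → ℝ², ẽ : [0,∞) → ℝ³ be differentiable solutions of q̃′(t) = −k_q · q̃(t) − C̄(θ(t))ᵀ ẽ(t), ẽ′(t) = C̄(θ(t)) q̃(t) − k_e · (0, ẽ₂(t), ẽ₃(t)), where C̄(θ) is the 3×2 matrix with rows (0, 1), (cos θ, −d sin θ), (sin θ, d cos θ). Set V(0) = ½‖q̃(0)‖² + ½‖ẽ(0)‖². Then for every t ≥ 0, ‖q̃(t)‖ ≤ √(2 V(0)) and ‖ẽ(t)‖ ≤ √(2 V(0)); in particular q̃ and ẽ are bounded on [0,∞). -/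
/-!
`V` is the sum of the kinetic energies `½‖q̃‖²` and `½‖ẽ‖²`. The coupling terms `−C̄ᵀẽ` and `C̄q̃`
are adjoint to each other, so they cancel in `V′ = ⟨q̃, q̃′⟩ + ⟨ẽ, ẽ′⟩`, leaving
`V′ = −k_q‖q̃‖² − k_e(ẽ₂² + ẽ₃²) ≤ 0` whatever `θ` is. Hence `V(t) ≤ V(0)`, and each of
`‖q̃(t)‖²`, `‖ẽ(t)‖²` is at most `2V(t)`.
-/

open Matrix Filter Real

lemma hasDerivAt_half_sum_sq {ι : Type*} [Fintype ι] {x : ℝ → ι → ℝ} {x' : ι → ℝ} {t : ℝ}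
    (hx : HasDerivAt x x' t) :
    HasDerivAt (fun s => (1 / 2) * ∑ i, x s i ^ 2) (x t ⬝ᵥ x') t := by
  have hsum := (HasDerivAt.fun_sum (u := Finset.univ) fun i _ =>
    (hasDerivAt_pi.mp hx i).pow 2).const_mul (1 / 2)
  refine hsum.congr_deriv ?_
  simp only [dotProduct, Finset.mul_sum]
  refine Finset.sum_congr rfl fun i _ => ?_
  push_cast
  ring

theorem antitoneOn_energy_of_skew_coupling {m n : Type*} [Fintype m] [Fintype n]
    {k : ℝ} (hk : 0 ≤ k) (C : ℝ → Matrix m n ℝ) {w : ℝ → m → ℝ}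
    {q : ℝ → n → ℝ} {e : ℝ → m → ℝ}
    (hq : ∀ t, 0 ≤ t → HasDerivAt q ((-k) • q t - (C t)ᵀ *ᵥ e t) t)
    (he : ∀ t, 0 ≤ t → HasDerivAt e (C t *ᵥ q t - w t) t)
    (hw : ∀ t, 0 ≤ t → 0 ≤ e t ⬝ᵥ w t) :
    AntitoneOn (fun t => (1 / 2) * ∑ i, q t i ^ 2 + (1 / 2) * ∑ i, e t i ^ 2) (Set.Ici 0) := by
  have hV : ∀ t, 0 ≤ t → HasDerivAt
      (fun t => (1 / 2) * ∑ i, q t i ^ 2 + (1 / 2) * ∑ i, e t i ^ 2)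
      (-k * (q t ⬝ᵥ q t) - e t ⬝ᵥ w t) t := fun t ht => by
    refine ((hasDerivAt_half_sum_sq (hq t ht)).add
      (hasDerivAt_half_sum_sq (he t ht))).congr_deriv ?_
    rw [dotProduct_sub, dotProduct_sub, dotProduct_smul, dotProduct_transpose_mulVec, smul_eq_mul]
    ring
  refine antitoneOn_of_hasDerivWithinAt_nonpos (convex_Ici 0)
    (fun t ht => (hV t ht).continuousAt.continuousWithinAt)
    (fun t ht => (hV t (interior_subset ht)).hasDerivWithinAt) fun t ht => ?_
  have ht : 0 ≤ t := interior_subset ht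
  have hqq : 0 ≤ q t ⬝ᵥ q t := Finset.sum_nonneg fun i _ => mul_self_nonneg (q t i)
  nlinarith [hw t ht, mul_nonneg hk hqq]

lemma dotProduct_smul_tail_nonneg {k : ℝ} (hk : 0 ≤ k) (e : Fin 3 → ℝ) :
    0 ≤ e ⬝ᵥ (k • ![(0 : ℝ), e 1, e 2]) := by
  simp only [dotProduct, Fin.sum_univ_three, Pi.smul_apply, smul_eq_mul, Fin.isValue,
    cons_val_zero, cons_val_one, cons_val, mul_zero, zero_add]
  nlinarith [mul_nonneg hk (mul_self_nonneg (e 1)), mul_nonneg hk (mul_self_nonneg (e 2))]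

lemma sqrt_sum_sq_le_of_energy_le {ι κ : Type*} [Fintype ι] [Fintype κ] {x : ι → ℝ} {y : κ → ℝ}
    {V : ℝ} (hV : (1 / 2) * ∑ i, x i ^ 2 + (1 / 2) * ∑ i, y i ^ 2 ≤ V) :
    √(∑ i, x i ^ 2) ≤ √(2 * V) ∧ √(∑ i, y i ^ 2) ≤ √(2 * V) := by
  have hx : 0 ≤ ∑ i, x i ^ 2 := Finset.sum_nonneg fun i _ => sq_nonneg _
  have hy : 0 ≤ ∑ i, y i ^ 2 := Finset.sum_nonneg fun i _ => sq_nonneg _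
  exact ⟨Real.sqrt_le_sqrt (by linarith), Real.sqrt_le_sqrt (by linarith)⟩

theorem ddwmr_tracking_errors_bounded_general
    (d kq ke : ℝ) (hkq : 0 < kq) (hke : 0 < ke)
    (θ : ℝ → ℝ)
    (qt : ℝ → (Fin 2 → ℝ)) (et : ℝ → (Fin 3 → ℝ))
    (hq : ∀ t, 0 ≤ t →
      HasDerivAt qt ((-kq) • qt t - (Cbar d (θ t))ᵀ.mulVec (et t)) t)
    (he : ∀ t, 0 ≤ t →
      HasDerivAt et ((Cbar d (θ t)).mulVec (qt t) - ke • ![(0 : ℝ), et t 1, et t 2]) t)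
    (V0 : ℝ)
    (hV0 : V0 = (1 / 2) * (∑ i, (qt 0 i) ^ 2) + (1 / 2) * (∑ i, (et 0 i) ^ 2)) :
    ∀ t, 0 ≤ t →
      Real.sqrt (∑ i, (qt t i) ^ 2) ≤ Real.sqrt (2 * V0) ∧
      Real.sqrt (∑ i, (et t i) ^ 2) ≤ Real.sqrt (2 * V0) := by
  intro t ht
  have hanti := antitoneOn_energy_of_skew_coupling hkq.le (fun s => Cbar d (θ s)) hq he
    fun s _ => dotProduct_smul_tail_nonneg hke.le (et s)
  exact sqrt_sum_sq_le_of_energy_le (hV0 ▸ hanti Set.self_mem_Ici ht ht)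

/-- Boundedness of the DDWMR closed-loop tracking errors: along the error
dynamics, for every `t ≥ 0` the Euclidean norms satisfy
`‖q̃(t)‖ ≤ √(2 V(0))` and `‖ẽ(t)‖ ≤ √(2 V(0))`, where
`V(0) = ½‖q̃(0)‖² + ½‖ẽ(0)‖²`. -/
theorem ddwmr_tracking_errors_bounded
    (d kq ke : ℝ) (hkq : 0 < kq) (hke : 0 < ke)
    (θ : ℝ → ℝ) (hθ : ContinuousOn θ (Set.Ici (0 : ℝ)))
    (qt : ℝ → (Fin 2 → ℝ)) (et : ℝ → (Fin 3 → ℝ))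
    (hq : ∀ t, 0 ≤ t →
      HasDerivAt qt ((-kq) • qt t - (Cbar d (θ t))ᵀ.mulVec (et t)) t)
    (he : ∀ t, 0 ≤ t →
      HasDerivAt et ((Cbar d (θ t)).mulVec (qt t) - ke • ![(0 : ℝ), et t 1, et t 2]) t)
    (V0 : ℝ)
    (hV0 : V0 = (1 / 2) * (∑ i, (qt 0 i) ^ 2) + (1 / 2) * (∑ i, (et 0 i) ^ 2)) :
    ∀ t, 0 ≤ t →
      Real.sqrt (∑ i, (qt t i) ^ 2) ≤ Real.sqrt (2 * V0) ∧
      Real.sqrt (∑ i, (et t i) ^ 2) ≤ Real.sqrt (2 * V0) :=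
  ddwmr_tracking_errors_bounded_general d kq ke hkq hke θ qt et hq he V0 hV0
end

section
/- Let d ∈ ℝ and k_q, k_e > 0, let θ : [0,∞) → ℝ be continuous, and let q̃ : [0,∞) → ℝ², ẽ : [0,∞) → ℝ³ be differentiable solutions of q̃′(t) = −k_q · q̃(t) − C̄(θ(t))ᵀ ẽ(t), ẽ′(t) = C̄(θ(t)) q̃(t) − k_e · (0, ẽ₂(t), ẽ₃(t)), where C̄(θ) is the 3×2 matrix with rows (0, 1), (cos θ, −d sin θ), (sin θ, d cos θ). Then for every t ≥ 0, ∫₀ᵗ ( k_q ‖q̃(s)‖² + k_e (ẽ₂(s)² + ẽ₃(s)²) ) ds ≤ ½‖q̃(0)‖² + ½‖ẽ(0)‖². Consequently ∫₀^∞ ‖q̃(s)‖² ds < ∞ and ∫₀^∞ (ẽ₂(s)² + ẽ₃(s)²) ds < ∞, i.e. q̃ and the planar position error e_z = (ẽ₂, ẽ₃) are square integrable on [0,∞). -/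
/-! The energy `½‖q̃‖² + ½‖ẽ‖²` is a Lyapunov function. The coupling terms `−C̄ᵀẽ` and `C̄q̃`
cancel in its derivative, leaving `−(k_q‖q̃‖² + k_e‖e_z‖²)`; integrating
and using that the energy is nonnegative gives the bound. The dissipation is nonnegative with
bounded partial integrals, hence integrable on `[0,∞)`, and it dominates each of its two terms. -/

open Matrix Filter Real MeasureTheory

theorem HasDerivAt.half_sum_sq {ι : Type*} [Fintype ι] {f : ℝ → ι → ℝ} {f' : ι → ℝ} {t : ℝ}
    (h : HasDerivAt f f' t) :
    HasDerivAt (fun s => (1 / 2) * ∑ i, f s i ^ 2) (f t ⬝ᵥ f') t := by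
  have hsum : HasDerivAt (fun s => ∑ i, f s i ^ 2) (∑ i, (2 : ℕ) * f t i ^ 1 * f' i) t :=
    HasDerivAt.fun_sum fun i _ => (hasDerivAt_pi.mp h i).fun_pow 2
  refine (hsum.const_mul (1 / 2 : ℝ)).congr_deriv ?_
  simp only [dotProduct, Finset.mul_sum]
  refine Finset.sum_congr rfl fun i _ => ?_
  push_cast
  ring

theorem hasDerivAt_energy_of_skew_coupling {m n : Type*} [Fintype m] [Fintype n]
    {q : ℝ → n → ℝ} {e : ℝ → m → ℝ} {C : Matrix m n ℝ} {u : n → ℝ} {w : m → ℝ} {t : ℝ}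
    (hq : HasDerivAt q (u - Cᵀ *ᵥ e t) t) (he : HasDerivAt e (C *ᵥ q t - w) t) :
    HasDerivAt (fun s => (1 / 2) * ∑ i, q s i ^ 2 + (1 / 2) * ∑ j, e s j ^ 2)
      (q t ⬝ᵥ u - e t ⬝ᵥ w) t := by
  refine (hq.half_sum_sq.add he.half_sum_sq).congr_deriv ?_
  rw [dotProduct_sub, dotProduct_sub, dotProduct_transpose_mulVec]
  ring

theorem intervalIntegral_le_of_hasDerivAt_neg {V F : ℝ → ℝ} {a b : ℝ} (hab : a ≤ b)
    (hV : ∀ t ∈ Set.Icc a b, HasDerivAt V (-F t) t) (hF : IntervalIntegrable F volume a b)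
    (hVb : 0 ≤ V b) : ∫ t in a..b, F t ≤ V a := by
  have hftc : ∫ t in a..b, -F t = V b - V a :=
    intervalIntegral.integral_eq_sub_of_hasDerivAt (fun t ht => hV t (Set.uIcc_of_le hab ▸ ht))
      hF.neg
  rw [intervalIntegral.integral_neg] at hftc
  linarith

theorem integrableOn_Ici_of_intervalIntegral_le {g : ℝ → ℝ} {a C : ℝ}
    (hg : ∀ t, a ≤ t → IntervalIntegrable g volume a t) (hg0 : ∀ t, a ≤ t → 0 ≤ g t)
    (hle : ∀ t, a ≤ t → ∫ s in a..t, g s ≤ C) : IntegrableOn g (Set.Ici a) := by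
  rw [integrableOn_Ici_iff_integrableOn_Ioi]
  refine integrableOn_Ioi_of_intervalIntegral_norm_bounded C a (b := id) (fun t => ?_)
    tendsto_id ?_
  · rcases le_total a t with hat | hta
    · exact (hg t hat).1
    · simp [Set.Ioc_eq_empty_of_le hta]
  · filter_upwards [eventually_ge_atTop a] with t hat
    rw [intervalIntegral.integral_congr fun s hs => Real.norm_of_nonneg
      (hg0 s (Set.uIcc_of_le hat ▸ hs).1)]
    exact hle t hat

theorem MeasureTheory.IntegrableOn.of_nonneg_of_const_mul_le {g F : ℝ → ℝ} {s : Set ℝ} {c : ℝ}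
    (hF : IntegrableOn F s) (hg : ContinuousOn g s) (hs : MeasurableSet s) (hc : 0 < c)
    (hg0 : ∀ x ∈ s, 0 ≤ g x) (hgF : ∀ x ∈ s, c * g x ≤ F x) : IntegrableOn g s := by
  refine Integrable.mono' (hF.div_const c) (hg.aestronglyMeasurable hs) ?_
  refine ae_restrict_of_forall_mem hs fun x hx => ?_
  rw [Real.norm_of_nonneg (hg0 x hx), le_div_iff₀ hc, mul_comm]
  exact hgF x hx

theorem ddwmr_tracking_errors_square_integrable_general
    (d kq ke : ℝ) (hkq : 0 < kq) (hke : 0 < ke)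
    (θ : ℝ → ℝ)
    (qt : ℝ → (Fin 2 → ℝ)) (et : ℝ → (Fin 3 → ℝ))
    (hq : ∀ t, 0 ≤ t →
      HasDerivAt qt ((-kq) • qt t - (Cbar d (θ t))ᵀ.mulVec (et t)) t)
    (he : ∀ t, 0 ≤ t →
      HasDerivAt et ((Cbar d (θ t)).mulVec (qt t) - ke • ![(0 : ℝ), et t 1, et t 2]) t) :
    (∀ t, 0 ≤ t →
      (∫ s in (0 : ℝ)..t, (kq * (∑ i, (qt s i) ^ 2) + ke * ((et s 1) ^ 2 + (et s 2) ^ 2)))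
        ≤ (1 / 2) * (∑ i, (qt 0 i) ^ 2) + (1 / 2) * (∑ i, (et 0 i) ^ 2)) ∧
    IntegrableOn (fun s => ∑ i, (qt s i) ^ 2) (Set.Ici (0 : ℝ)) ∧
    IntegrableOn (fun s => (et s 1) ^ 2 + (et s 2) ^ 2) (Set.Ici (0 : ℝ)) := by
  set Q : ℝ → ℝ := fun s => ∑ i, qt s i ^ 2
  set Z : ℝ → ℝ := fun s => et s 1 ^ 2 + et s 2 ^ 2
  have hQ0 : ∀ s, 0 ≤ Q s := fun s => by positivity
  have hZ0 : ∀ s, 0 ≤ Z s := fun s => by positivity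
  have hE : ∀ t, 0 ≤ t → HasDerivAt (fun s => (1 / 2) * Q s + (1 / 2) * ∑ j, et s j ^ 2)
      (-(kq * Q t + ke * Z t)) t := fun t ht =>
    (hasDerivAt_energy_of_skew_coupling (hq t ht) (he t ht)).congr_deriv (by
      simp only [Q, Z, dotProduct, Fin.sum_univ_two, Fin.sum_univ_three, Pi.smul_apply,
        smul_eq_mul, cons_val_zero, cons_val_one, cons_val_two, head_cons, tail_cons]
      ring)
  have hqc : ContinuousOn qt (Set.Ici 0) := fun s hs => (hq s hs).continuousAt.continuousWithinAt
  have hec : ContinuousOn et (Set.Ici 0) := fun s hs => (he s hs).continuousAt.continuousWithinAt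
  have hQc : ContinuousOn Q (Set.Ici 0) := by fun_prop
  have hZc : ContinuousOn Z (Set.Ici 0) := by fun_prop
  have hFint : ∀ t, 0 ≤ t → IntervalIntegrable (fun s => kq * Q s + ke * Z s) volume 0 t :=
    fun t ht => ((hQc.const_smul kq).add (hZc.const_smul ke)).mono
      (Set.uIcc_of_le ht ▸ Set.Icc_subset_Ici_self) |>.intervalIntegrable
  have hbound : ∀ t, 0 ≤ t → ∫ s in (0 : ℝ)..t, (kq * Q s + ke * Z s)
      ≤ (1 / 2) * Q 0 + (1 / 2) * ∑ j, et 0 j ^ 2 := fun t ht =>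
    intervalIntegral_le_of_hasDerivAt_neg ht (fun s hs => hE s hs.1) (hFint t ht) (by positivity)
  have hF : IntegrableOn (fun s => kq * Q s + ke * Z s) (Set.Ici 0) :=
    integrableOn_Ici_of_intervalIntegral_le hFint (fun s _ => by positivity) hbound
  refine ⟨hbound, ?_, ?_⟩
  · refine hF.of_nonneg_of_const_mul_le hQc measurableSet_Ici hkq (fun s _ => hQ0 s) ?_
    exact fun s _ => le_add_of_nonneg_right (mul_nonneg hke.le (hZ0 s))
  · refine hF.of_nonneg_of_const_mul_le hZc measurableSet_Ici hke (fun s _ => hZ0 s) ?_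
    exact fun s _ => le_add_of_nonneg_left (mul_nonneg hkq.le (hQ0 s))

/-- Square integrability of the DDWMR closed-loop tracking errors: along the
error dynamics, for every `t ≥ 0`,
`∫₀ᵗ (k_q ‖q̃(s)‖² + k_e (ẽ₂(s)² + ẽ₃(s)²)) ds ≤ ½‖q̃(0)‖² + ½‖ẽ(0)‖²`;
consequently `q̃` and the planar position error `e_z = (ẽ₂, ẽ₃)` are square
integrable on `[0,∞)`. -/
theorem ddwmr_tracking_errors_square_integrable
    (d kq ke : ℝ) (hkq : 0 < kq) (hke : 0 < ke)
    (θ : ℝ → ℝ) (hθ : ContinuousOn θ (Set.Ici (0 : ℝ)))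
    (qt : ℝ → (Fin 2 → ℝ)) (et : ℝ → (Fin 3 → ℝ))
    (hq : ∀ t, 0 ≤ t →
      HasDerivAt qt ((-kq) • qt t - (Cbar d (θ t))ᵀ.mulVec (et t)) t)
    (he : ∀ t, 0 ≤ t →
      HasDerivAt et ((Cbar d (θ t)).mulVec (qt t) - ke • ![(0 : ℝ), et t 1, et t 2]) t) :
    (∀ t, 0 ≤ t →
      (∫ s in (0 : ℝ)..t, (kq * (∑ i, (qt s i) ^ 2) + ke * ((et s 1) ^ 2 + (et s 2) ^ 2)))
        ≤ (1 / 2) * (∑ i, (qt 0 i) ^ 2) + (1 / 2) * (∑ i, (et 0 i) ^ 2)) ∧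
    IntegrableOn (fun s => ∑ i, (qt s i) ^ 2) (Set.Ici (0 : ℝ)) ∧
    IntegrableOn (fun s => (et s 1) ^ 2 + (et s 2) ^ 2) (Set.Ici (0 : ℝ)) :=
  ddwmr_tracking_errors_square_integrable_general d kq ke hkq hke θ qt et hq he
end
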